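/- arXiv:1901.08186 — 7 statements merged into one kernel-verified Lean document; each statement's English description precedes it below -/
import Mathlib

section
/- Let K be an invertible ℓ×ℓ matrix over F_2 and fix i with 1 ≤ i ≤ ℓ. An erasure pattern e ∈ F_2^ℓ is uncorrectable for bit-channel i if and only if e covers some vector of the set difference C_{i-1} \ C_i, i.e., if and only if there exists c ∈ C_{i-1} with c ∉ C_i and supp(c) ⊆ supp(e). -/
/-- The support of a vector over `ZMod 2`. -/
def supp {ℓ : ℕ} (v : Fin ℓ → ZMod 2) : Set (Fin ℓ) := {j | v j ≠ 0}

/-- The Hamming weight of a vector over `ZMod 2`. -/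
def wt {ℓ : ℕ} (v : Fin ℓ → ZMod 2) : ℕ :=
  (Finset.univ.filter fun j => v j ≠ 0).card

/-- The kernel code `C_i`: the span of the rows `g_{i+1}, …, g_ℓ` of `K`
(rows of index `≥ i` in 0-based indexing). -/
def kernelCode {ℓ : ℕ} (K : Matrix (Fin ℓ) (Fin ℓ) (ZMod 2)) (i : ℕ) :
    Submodule (ZMod 2) (Fin ℓ → ZMod 2) :=
  Submodule.span (ZMod 2) {v | ∃ r : Fin ℓ, i ≤ (r : ℕ) ∧ v = K r}

/-- `e` is an uncorrectable erasure pattern for the bit-channel of (0-based) index `i`. -/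
def Uncorrectable {ℓ : ℕ} (K : Matrix (Fin ℓ) (Fin ℓ) (ZMod 2)) (i : Fin ℓ)
    (e : Fin ℓ → ZMod 2) : Prop :=
  ∃ u' u'' : Fin ℓ → ZMod 2,
    (∀ j, j < i → u' j = u'' j) ∧ u' i ≠ u'' i ∧
      ∀ j, e j = 0 → Matrix.vecMul u' K j = Matrix.vecMul u'' K j

/-- `E_{i,w}`: the number of uncorrectable erasure patterns of weight `w`
for bit-channel `i`. -/
noncomputable def Ecount {ℓ : ℕ} (K : Matrix (Fin ℓ) (Fin ℓ) (ZMod 2)) (i : Fin ℓ)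
    (w : ℕ) : ℕ :=
  Nat.card {e : Fin ℓ → ZMod 2 // Uncorrectable K i e ∧ wt e = w}

/-- `f_i(z) = ∑_{w=0}^{ℓ} E_{i,w} z^w (1-z)^{ℓ-w}`. -/
noncomputable def fpoly {ℓ : ℕ} (K : Matrix (Fin ℓ) (Fin ℓ) (ZMod 2)) (i : Fin ℓ)
    (z : ℝ) : ℝ :=
  ∑ w ∈ Finset.range (ℓ + 1), (Ecount K i w : ℝ) * z ^ w * (1 - z) ^ (ℓ - w)

/-- Dual code with respect to the standard bilinear form `⟨u,v⟩ = ∑ j, u j * v j`. -/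
def dualCode {ℓ : ℕ} (C : Submodule (ZMod 2) (Fin ℓ → ZMod 2)) :
    Submodule (ZMod 2) (Fin ℓ → ZMod 2) where
  carrier := {v | ∀ c ∈ C, ∑ j, v j * c j = 0}
  add_mem' := by
    intro a b ha hb c hc
    simpa [add_mul, Finset.sum_add_distrib] using by rw [ha c hc, hb c hc]; simp
  zero_mem' := by intro c hc; simp
  smul_mem' := by
    intro r a ha c hc
    simp only [Pi.smul_apply, smul_eq_mul, mul_assoc, ← Finset.mul_sum, Set.mem_setOf_eq]
    rw [ha c hc, mul_zero]

/-- `K` is self-dual if `C_i = C_{ℓ-i}^⊥` for all `0 ≤ i ≤ ℓ`. -/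
def SelfDual {ℓ : ℕ} (K : Matrix (Fin ℓ) (Fin ℓ) (ZMod 2)) : Prop :=
  ∀ i ≤ ℓ, kernelCode K i = dualCode (kernelCode K (ℓ - i))

/-! Both sides say the same thing about the coefficient vector `d` of a codeword `d ᵥ* K`:
`d` vanishes before `i`, is nonzero at `i`, and `d ᵥ* K` vanishes off `supp e`. For the
uncorrectable pair take `d = u' - u''` (conversely `u' = d`, `u'' = 0`); for the code side,
`c ∈ C_{i-1} \ C_i` pins down `d i ≠ 0` because `K` is invertible. -/

open Matrix

lemma kernelCode_eq_span_image {ℓ : ℕ} (K : Matrix (Fin ℓ) (Fin ℓ) (ZMod 2)) (i : ℕ) :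
    kernelCode K i =
      Submodule.span (ZMod 2) (K.row '' ↑(Finset.univ.filter fun r : Fin ℓ => i ≤ r)) := by
  rw [kernelCode]
  congr 1
  ext v
  constructor <;> rintro ⟨r, hr, rfl⟩ <;> exact ⟨r, by simpa using hr, rfl⟩

lemma mem_kernelCode_iff {ℓ : ℕ} (K : Matrix (Fin ℓ) (Fin ℓ) (ZMod 2)) (i : ℕ)
    (c : Fin ℓ → ZMod 2) :
    c ∈ kernelCode K i ↔
      ∃ d : Fin ℓ → ZMod 2, (∀ r : Fin ℓ, (r : ℕ) < i → d r = 0) ∧ d ᵥ* K = c := by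
  rw [kernelCode_eq_span_image, Submodule.mem_span_image_finset_iff_exists_fun']
  constructor
  · rintro ⟨d, rfl⟩
    refine ⟨fun r => if i ≤ r then d r else 0, fun r hr => if_neg (by omega), ?_⟩
    simp only [vecMul_eq_sum, ite_smul, zero_smul, Finset.sum_filter, row]
  · rintro ⟨d, hd, rfl⟩
    refine ⟨d, (Finset.sum_subset (Finset.subset_univ _) fun r _ hr => ?_).trans
      (vecMul_eq_sum d K).symm⟩
    simp [hd r (by simpa using hr)]

lemma mem_kernelCode_diff_iff {ℓ : ℕ} {K : Matrix (Fin ℓ) (Fin ℓ) (ZMod 2)} (hK : IsUnit K.det)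
    (i : Fin ℓ) (c : Fin ℓ → ZMod 2) :
    c ∈ kernelCode K i ∧ c ∉ kernelCode K (i + 1) ↔
      ∃ d : Fin ℓ → ZMod 2, (∀ r < i, d r = 0) ∧ d i ≠ 0 ∧ d ᵥ* K = c := by
  have hinj : Function.Injective K.vecMul :=
    vecMul_injective_of_isUnit ((isUnit_iff_isUnit_det K).mpr hK)
  simp only [mem_kernelCode_iff, Fin.lt_def, Nat.lt_succ_iff_lt_or_eq]
  constructor
  · rintro ⟨⟨d, hd, rfl⟩, hnot⟩
    refine ⟨d, hd, fun hdi => hnot ⟨d, fun r hr => ?_, rfl⟩, rfl⟩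
    rcases hr with hr | hr
    · exact hd r hr
    · rwa [Fin.ext hr]
  · rintro ⟨d, hd, hdi, rfl⟩
    refine ⟨⟨d, hd, rfl⟩, fun ⟨d', hd', hdd'⟩ => hdi ?_⟩
    rw [← hinj hdd']
    exact hd' i (Or.inr rfl)

lemma uncorrectable_iff_exists_coeff {ℓ : ℕ} (K : Matrix (Fin ℓ) (Fin ℓ) (ZMod 2)) (i : Fin ℓ)
    (e : Fin ℓ → ZMod 2) :
    Uncorrectable K i e ↔
      ∃ d : Fin ℓ → ZMod 2, (∀ r < i, d r = 0) ∧ d i ≠ 0 ∧ ∀ j, e j = 0 → (d ᵥ* K) j = 0 := by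
  constructor
  · rintro ⟨u', u'', hlt, hi, he⟩
    refine ⟨u' - u'', fun r hr => sub_eq_zero.mpr (hlt r hr), sub_ne_zero.mpr hi,
      fun j hj => ?_⟩
    rw [sub_vecMul, Pi.sub_apply, he j hj, sub_self]
  · rintro ⟨d, hd, hdi, he⟩
    refine ⟨d, 0, fun r hr => hd r hr, hdi, fun j hj => ?_⟩
    rw [he j hj, zero_vecMul, Pi.zero_apply]

lemma supp_subset_supp_iff {ℓ : ℕ} (c e : Fin ℓ → ZMod 2) :
    supp c ⊆ supp e ↔ ∀ j, e j = 0 → c j = 0 :=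
  forall_congr' fun _ => not_imp_not

theorem erasure_uncorrectable_iff_covers_general {ℓ : ℕ}
    (K : Matrix (Fin ℓ) (Fin ℓ) (ZMod 2)) (hK : IsUnit K.det)
    (i : Fin ℓ) (e : Fin ℓ → ZMod 2) :
    Uncorrectable K i e ↔
      ∃ c, c ∈ kernelCode K (i : ℕ) ∧ c ∉ kernelCode K ((i : ℕ) + 1) ∧
        supp c ⊆ supp e := by
  rw [uncorrectable_iff_exists_coeff]
  constructor
  · rintro ⟨d, hd, hdi, he⟩
    obtain ⟨hc, hc'⟩ := (mem_kernelCode_diff_iff hK i _).mpr ⟨d, hd, hdi, rfl⟩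
    exact ⟨d ᵥ* K, hc, hc', (supp_subset_supp_iff _ _).mpr he⟩
  · rintro ⟨c, hc, hc', hsupp⟩
    obtain ⟨d, hd, hdi, rfl⟩ := (mem_kernelCode_diff_iff hK i c).mp ⟨hc, hc'⟩
    exact ⟨d, hd, hdi, (supp_subset_supp_iff _ _).mp hsupp⟩

/-- Theorem 1: an erasure pattern `e` is uncorrectable for bit-channel `i` if and only
if `e` covers some vector of `C_{i-1} \ C_i`. -/
theorem erasure_uncorrectable_iff_covers {ℓ : ℕ} (hℓ : 0 < ℓ)
    (K : Matrix (Fin ℓ) (Fin ℓ) (ZMod 2)) (hK : IsUnit K.det)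
    (i : Fin ℓ) (e : Fin ℓ → ZMod 2) :
    Uncorrectable K i e ↔
      ∃ c, c ∈ kernelCode K (i : ℕ) ∧ c ∉ kernelCode K ((i : ℕ) + 1) ∧
        supp c ⊆ supp e :=
  erasure_uncorrectable_iff_covers_general K hK i e
end

section
/- Let K be an invertible ℓ×ℓ matrix over F_2 and fix i with 1 ≤ i ≤ ℓ. The function f_i is nondecreasing on [0,1]: for all real z_1, z_2 with 0 ≤ z_1 ≤ z_2 ≤ 1, one has f_i(z_1) ≤ f_i(z_2). -/
/-!
Erasing more positions can only make a pattern "more uncorrectable", so the uncorrectable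
patterns form an up-set. Differentiating, `f_i'(z)` is
`∑_{w<ℓ} ((w+1) E_{i,w+1} - (ℓ-w) E_{i,w}) z^w (1-z)^(ℓ-1-w)`, and every coefficient is
nonnegative by the upward local LYM inequality for that up-set: erasing one of the `ℓ - w`
unerased positions of an uncorrectable pattern of weight `w` gives one of weight `w + 1`, and each
pattern of weight `w + 1` arises this way from at most `w + 1` pairs.
-/

open Finset

theorem hasDerivAt_pow_mul_one_sub_pow (w m : ℕ) (z : ℝ) :
    HasDerivAt (fun z : ℝ => z ^ w * (1 - z) ^ m)
      (w * z ^ (w - 1) * (1 - z) ^ m - m * z ^ w * (1 - z) ^ (m - 1)) z :=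
  ((hasDerivAt_pow w z).fun_mul (((hasDerivAt_id' z).const_sub 1).fun_pow m)).congr_deriv
    (by ring)

theorem hasDerivAt_sum_mul_pow_mul_one_sub_pow (n : ℕ) (a : ℕ → ℝ) (z : ℝ) :
    HasDerivAt (fun z : ℝ => ∑ w ∈ range (n + 1), a w * z ^ w * (1 - z) ^ (n - w))
      (∑ w ∈ range n, ((w + 1) * a (w + 1) - (n - w : ℕ) * a w) * z ^ w * (1 - z) ^ (n - 1 - w))
      z := by
  have h := HasDerivAt.fun_sum fun w (_ : w ∈ range (n + 1)) =>
    (hasDerivAt_pow_mul_one_sub_pow w (n - w) z).const_mul (a w)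
  simp only [← mul_assoc] at h
  refine h.congr_deriv ?_
  simp only [mul_sub, ← mul_assoc]
  rw [sum_sub_distrib, sum_range_succ' _ n, sum_range_succ _ n]
  simp only [Nat.sub_self, Nat.cast_zero, mul_zero, zero_mul, add_zero, ← sum_sub_distrib]
  refine sum_congr rfl fun w _ => ?_
  rw [Nat.add_sub_cancel, Nat.sub_sub, add_comm w 1, ← Nat.sub_sub]
  push_cast
  ring

theorem monotoneOn_sum_mul_pow_mul_one_sub_pow {n : ℕ} {a : ℕ → ℝ}
    (ha : ∀ w < n, (n - w : ℕ) * a w ≤ (w + 1) * a (w + 1)) :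
    MonotoneOn (fun z : ℝ => ∑ w ∈ range (n + 1), a w * z ^ w * (1 - z) ^ (n - w))
      (Set.Icc 0 1) := by
  have hd := hasDerivAt_sum_mul_pow_mul_one_sub_pow n a
  refine monotoneOn_of_deriv_nonneg (convex_Icc 0 1)
    (fun z _ => (hd z).continuousAt.continuousWithinAt)
    (fun z _ => (hd z).differentiableAt.differentiableWithinAt) fun z hz => ?_
  rw [interior_Icc] at hz
  rw [(hd z).deriv]
  refine sum_nonneg fun w hw => mul_nonneg (mul_nonneg ?_ ?_) ?_
  · exact sub_nonneg.2 (ha w (mem_range.1 hw))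
  · exact pow_nonneg hz.1.le w
  · exact pow_nonneg (sub_nonneg.2 hz.2.le) _

section Weight

variable {ℓ : ℕ}

theorem card_filter_eq_zero (e : Fin ℓ → ZMod 2) : #{j | e j = 0} = ℓ - wt e := by
  have h := card_filter_add_card_filter_not (s := univ) (p := fun j => e j ≠ 0)
  simp only [not_not, card_univ, Fintype.card_fin] at h
  rw [wt]
  omega

theorem wt_update_one {e : Fin ℓ → ZMod 2} {j : Fin ℓ} (hj : e j = 0) :
    wt (Function.update e j 1) = wt e + 1 := by
  have h : univ.filter (fun k => Function.update e j 1 k ≠ 0) =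
      insert j (univ.filter fun k => e k ≠ 0) := by
    ext k
    by_cases hk : k = j <;> simp [Function.update_apply, hk, hj]
  rw [wt, h, card_insert_of_notMem (by simp [hj]), wt]

theorem supp_subset_supp_update_one (e : Fin ℓ → ZMod 2) (j : Fin ℓ) :
    supp e ⊆ supp (Function.update e j 1) := by
  intro k hk
  by_cases hkj : k = j
  · subst hkj; simp [supp]
  · simpa [supp, Function.update_of_ne hkj] using hk

theorem eq_of_update_one_eq {e e' : Fin ℓ → ZMod 2} {j : Fin ℓ} (hj : e j = 0) (hj' : e' j = 0)
    (h : Function.update e j 1 = Function.update e' j 1) : e = e' := by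
  rw [← Function.update_eq_self j e, ← Function.update_eq_self j e', hj, hj',
    ← Function.update_idem (f := e) (a := j) 1 0, h, Function.update_idem]

theorem card_layer_mul_le_card_layer_succ_mul {P : (Fin ℓ → ZMod 2) → Prop} [DecidablePred P]
    (hP : ∀ ⦃e e'⦄, P e → supp e ⊆ supp e' → P e') (w : ℕ) :
    (ℓ - w) * #{e | P e ∧ wt e = w} ≤ (w + 1) * #{e | P e ∧ wt e = w + 1} := by
  set S := ({e | P e ∧ wt e = w} : Finset _).sigma fun e => {j | e j = 0}
  set T := ({e | P e ∧ wt e = w + 1} : Finset _).sigma fun e => {j | e j ≠ 0}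
  have hS : #S = #{e | P e ∧ wt e = w} * (ℓ - w) := by
    rw [card_sigma, sum_const_nat]
    intro e he
    rw [card_filter_eq_zero, (mem_filter.1 he).2.2]
  have hT : #T = #{e | P e ∧ wt e = w + 1} * (w + 1) := by
    rw [card_sigma, sum_const_nat]
    exact fun e he => (mem_filter.1 he).2.2
  rw [mul_comm, ← hS, mul_comm, ← hT]
  refine card_le_card_of_injOn (fun p => ⟨Function.update p.1 p.2 1, p.2⟩) ?_ ?_
  · rintro ⟨e, j⟩ hej
    simp only [S, T, coe_sigma, Set.mem_sigma_iff, coe_filter, mem_univ, true_and,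
      Set.mem_ofPred_eq] at hej ⊢
    obtain ⟨⟨he, hw⟩, hj⟩ := hej
    exact ⟨⟨hP he (supp_subset_supp_update_one e j), by rw [wt_update_one hj, hw]⟩, by simp⟩
  · rintro ⟨e, j⟩ hej ⟨e', j'⟩ hej' h
    simp only [S, coe_sigma, Set.mem_sigma_iff, coe_filter, mem_univ, true_and,
      Set.mem_ofPred_eq] at hej hej'
    obtain ⟨h, rfl⟩ : Function.update e j 1 = Function.update e' j' 1 ∧ j = j' := by
      simpa using h
    rw [eq_of_update_one_eq hej.2 hej'.2 h]

end Weight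

theorem Uncorrectable.mono {ℓ : ℕ} {K : Matrix (Fin ℓ) (Fin ℓ) (ZMod 2)} {i : Fin ℓ}
    {e e' : Fin ℓ → ZMod 2} (h : Uncorrectable K i e) (hs : supp e ⊆ supp e') :
    Uncorrectable K i e' := by
  obtain ⟨u', u'', hlt, hi, heq⟩ := h
  exact ⟨u', u'', hlt, hi, fun j hj => heq j (not_not.1 fun hej => hs hej hj)⟩

open scoped Classical in
theorem Ecount_eq_card {ℓ : ℕ} (K : Matrix (Fin ℓ) (Fin ℓ) (ZMod 2)) (i : Fin ℓ) (w : ℕ) :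
    Ecount K i w = #{e | Uncorrectable K i e ∧ wt e = w} := by
  rw [Ecount, Nat.card_eq_fintype_card, Fintype.card_subtype]

theorem fpoly_monotoneOn_general {ℓ : ℕ}
    (K : Matrix (Fin ℓ) (Fin ℓ) (ZMod 2)) (i : Fin ℓ) :
    ∀ z₁ z₂ : ℝ, 0 ≤ z₁ → z₁ ≤ z₂ → z₂ ≤ 1 → fpoly K i z₁ ≤ fpoly K i z₂ := by
  classical
  have hmono : MonotoneOn (fpoly K i) (Set.Icc 0 1) := by
    refine monotoneOn_sum_mul_pow_mul_one_sub_pow fun w _ => ?_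
    simp only [Ecount_eq_card]
    exact_mod_cast card_layer_mul_le_card_layer_succ_mul (P := Uncorrectable K i)
      (fun _ _ h hs => h.mono hs) w
  intro z₁ z₂ h₀ h₁₂ h₂₁
  exact hmono ⟨h₀, h₁₂.trans h₂₁⟩ ⟨h₀.trans h₁₂, h₂₁⟩ h₁₂

/-- `f_i` is nondecreasing on `[0,1]`. -/
theorem fpoly_monotoneOn {ℓ : ℕ} (hℓ : 0 < ℓ)
    (K : Matrix (Fin ℓ) (Fin ℓ) (ZMod 2)) (hK : IsUnit K.det) (i : Fin ℓ) :
    ∀ z₁ z₂ : ℝ, 0 ≤ z₁ → z₁ ≤ z₂ → z₂ ≤ 1 → fpoly K i z₁ ≤ fpoly K i z₂ :=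
  fpoly_monotoneOn_general K i
end

section
/- Let K be an invertible ℓ×ℓ matrix over F_2. For every erasure pattern e ∈ F_2^ℓ, the number of indices i ∈ {1,…,ℓ} for which e is uncorrectable for bit-channel i equals the Hamming weight wt(e). -/
set_option synthInstance.maxHeartbeats 1000000
set_option maxHeartbeats 1000000


/-!
Two inputs confuse bit-channel `i` exactly when their difference `d` vanishes before `i`, is
nonzero at `i`, and `d K` vanishes outside `supp e`. So `e` is uncorrectable for `i` iff `i` is
the pivot (leading position) of some vector of `W = {d | supp (d K) ⊆ supp e}`. Along the
filtration `W ∩ {d | d j = 0 for j < k}` the dimension drops by one exactly at the pivots, so a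
subspace has as many pivots as its dimension; and `dim W = wt e` as `K` is invertible.
-/

open Module

section Pivots

variable (F : Type*) [Field F]

def vanishingOn {ι : Type*} (s : Set ι) : Submodule F (ι → F) :=
  ⨅ j ∈ s, LinearMap.ker (LinearMap.proj j)

variable {F}

@[simp]
theorem mem_vanishingOn {ι : Type*} {s : Set ι} {v : ι → F} :
    v ∈ vanishingOn F s ↔ ∀ j ∈ s, v j = 0 := by
  simp [vanishingOn]

theorem finrank_vanishingOn {ι : Type*} [Fintype ι] (s : Set ι) [DecidablePred (· ∈ s)] :
    finrank F (vanishingOn F s) = Fintype.card ↥sᶜ :=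
  (LinearMap.iInfKerProjEquiv F (fun _ : ι => F) disjoint_compl_left
      (by simp)).finrank_eq.trans (finrank_fintype_fun_eq_card F)

variable {n : ℕ}

def IsPivot (W : Submodule F (Fin n → F)) (i : Fin n) : Prop :=
  ∃ v ∈ W, (∀ j < i, v j = 0) ∧ v i ≠ 0

theorem finrank_inf_vanishingOn_lt_eq_succ_add (W : Submodule F (Fin n → F)) (i : Fin n)
    [Decidable (IsPivot W i)] :
    finrank F ↥(W ⊓ vanishingOn F {j : Fin n | (j : ℕ) < i}) =
      finrank F ↥(W ⊓ vanishingOn F {j : Fin n | (j : ℕ) < i + 1}) +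
        if IsPivot W i then 1 else 0 := by
  set A := W ⊓ vanishingOn F {j : Fin n | (j : ℕ) < i}
  set B := W ⊓ vanishingOn F {j : Fin n | (j : ℕ) < i + 1}
  have hBA : B ≤ A := inf_le_inf_left W fun v hv => by
    simp only [mem_vanishingOn, Set.mem_ofPred_eq] at hv ⊢
    exact fun j hj => hv j (by omega)
  let f : A →ₗ[F] F := LinearMap.proj i ∘ₗ A.subtype
  have hker : LinearMap.ker f = B.comap A.subtype := by
    ext v
    obtain ⟨hvW, hv⟩ := Submodule.mem_inf.mp v.2
    simp only [mem_vanishingOn, Set.mem_ofPred_eq] at hv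
    simp only [f, B, LinearMap.mem_ker, Submodule.mem_comap, Submodule.mem_inf, mem_vanishingOn]
    simp only [LinearMap.comp_apply, Submodule.subtype_apply, LinearMap.proj_apply, hvW,
      Set.mem_ofPred_eq, Nat.lt_succ_iff, Fin.val_fin_le, true_and]
    exact ⟨fun h j hj => hj.lt_or_eq.elim (hv j) (· ▸ h), fun h => h i le_rfl⟩
  have hrange : finrank F (LinearMap.range f) = if IsPivot W i then 1 else 0 := by
    have hf : f ≠ 0 ↔ IsPivot W i := by
      simp only [ne_eq, LinearMap.ext_iff, not_forall, Subtype.exists, IsPivot]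
      simp [f, A, and_assoc]
    split_ifs with hp
    · exact le_antisymm ((Submodule.finrank_le _).trans (finrank_self F).le)
        (Nat.one_le_iff_ne_zero.mpr <| by
          simpa [Submodule.finrank_eq_zero, LinearMap.range_eq_bot] using hf.mpr hp)
    · simp [not_not.mp (hf.not.mpr hp)]
  rw [← LinearMap.finrank_range_add_finrank_ker f, hker, hrange, add_comm,
    (Submodule.comapSubtypeEquivOfLe hBA).finrank_eq]

theorem finrank_eq_card_isPivot (W : Submodule F (Fin n → F)) :
    finrank F W = Nat.card {i // IsPivot W i} := by
  classical
  let d : ℕ → ℤ := fun k => finrank F ↥(W ⊓ vanishingOn F {j : Fin n | (j : ℕ) < k})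
  have hd0 : d 0 = finrank F W := by
    have : W ⊓ vanishingOn F {j : Fin n | (j : ℕ) < 0} = W := inf_eq_left.mpr fun v _ => by simp
    simp only [d]
    rw [this]
  have hdn : d n = 0 := by
    suffices W ⊓ vanishingOn F {j : Fin n | (j : ℕ) < n} = ⊥ by simp only [d]; rw [this]; simp
    refine eq_bot_iff.mpr fun v hv => funext fun j => ?_
    exact mem_vanishingOn.mp (Submodule.mem_inf.mp hv).2 j j.2
  have hstep (i : Fin n) : (if IsPivot W i then 1 else 0 : ℤ) = d i - d (i + 1) := by
    simp only [d, finrank_inf_vanishingOn_lt_eq_succ_add W i]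
    split_ifs <;> simp
  zify
  calc (finrank F W : ℤ) = d 0 - d n := by rw [hd0, hdn, sub_zero]
    _ = ∑ k ∈ Finset.range n, (d k - d (k + 1)) := (Finset.sum_range_sub' d n).symm
    _ = ∑ i : Fin n, (if IsPivot W i then 1 else 0 : ℤ) := by
      rw [← Fin.sum_univ_eq_sum_range (fun k => d k - d (k + 1))]
      simp only [hstep]
    _ = Nat.card {i // IsPivot W i} := by
      rw [Nat.card_eq_fintype_card, Fintype.card_subtype, Finset.card_filter]
      push_cast; rfl

end Pivots

theorem finrank_comap_vecMulLinear {F m : Type*} [Field F] [Fintype m] [DecidableEq m]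
    {K : Matrix m m F} (hK : IsUnit K) (p : Submodule F (m → F)) :
    finrank F (p.comap K.vecMulLinear) = finrank F p :=
  let φ := LinearEquiv.ofBijective K.vecMulLinear
    ⟨Matrix.vecMul_injective_of_isUnit hK, Matrix.vecMul_surjective_iff_isUnit.mpr hK⟩
  (LinearEquiv.ofSubmodule' φ p).finrank_eq

theorem uncorrectable_iff_isPivot {ℓ : ℕ} (K : Matrix (Fin ℓ) (Fin ℓ) (ZMod 2))
    (i : Fin ℓ) (e : Fin ℓ → ZMod 2) :
    Uncorrectable K i e ↔
      IsPivot ((vanishingOn (ZMod 2) {j | e j = 0}).comap K.vecMulLinear) i := by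
  constructor
  · rintro ⟨u', u'', h_eq, h_ne, h_erased⟩
    refine ⟨u' - u'', ?_, fun j hj => sub_eq_zero.mpr (h_eq j hj), sub_ne_zero.mpr h_ne⟩
    simpa [Matrix.sub_vecMul, sub_eq_zero] using h_erased
  · rintro ⟨v, hv, h_zero, h_ne⟩
    refine ⟨v, 0, fun j hj => by simp [h_zero j hj], by simpa using h_ne, fun j hj => ?_⟩
    simpa using (mem_vanishingOn.mp hv) j hj

theorem card_uncorrectable_channels_eq_wt_general {ℓ : ℕ}
    (K : Matrix (Fin ℓ) (Fin ℓ) (ZMod 2)) (hK : IsUnit K.det)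
    (e : Fin ℓ → ZMod 2) :
    Nat.card {i : Fin ℓ // Uncorrectable K i e} = wt e := by
  classical
  simp_rw [uncorrectable_iff_isPivot, ← finrank_eq_card_isPivot,
    finrank_comap_vecMulLinear ((Matrix.isUnit_iff_isUnit_det K).mpr hK), finrank_vanishingOn]
  simp [wt, Fintype.card_subtype]

/-- For every erasure pattern `e`, the number of bit-channels for which `e` is
uncorrectable equals the Hamming weight of `e`. -/
theorem card_uncorrectable_channels_eq_wt {ℓ : ℕ} (hℓ : 0 < ℓ)
    (K : Matrix (Fin ℓ) (Fin ℓ) (ZMod 2)) (hK : IsUnit K.det)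
    (e : Fin ℓ → ZMod 2) :
    Nat.card {i : Fin ℓ // Uncorrectable K i e} = wt e :=
  card_uncorrectable_channels_eq_wt_general K hK e
end

section
/- Let K be an invertible self-dual ℓ×ℓ matrix over F_2. Then for every i with 1 ≤ i ≤ ℓ and every w with 0 ≤ w ≤ ℓ, E_{i,w} + E_{ℓ+1-i, ℓ-w} ≤ binom(ℓ, w). -/
/-!
Write `g_i` for the rows of `K`. An erasure pattern `e` that is uncorrectable for bit-channel `i`
contains the support of a codeword `c ∈ g_i + C_i`. If the complement of `e` were uncorrectable
for channel `ℓ + 1 - i`, it would contain the support of some `c' ∈ g_{ℓ+1-i} + C_{ℓ+1-i}`, and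
`⟨c', c⟩ = 0` since the supports are disjoint. By self-duality `c' ∈ C_{ℓ-i} = C_i^⊥`, so
`⟨c', g_i⟩ = 0` and hence `c' ∈ C_{i-1}^⊥ = C_{ℓ+1-i}`, which puts `g_{ℓ+1-i}` in `C_{ℓ+1-i}`,
against the invertibility of `K`. So complementation maps the patterns counted by
`E_{ℓ+1-i,ℓ-w}` injectively to weight-`w` patterns not counted by `E_{i,w}`.
-/

open Finset Matrix

variable {ℓ : ℕ}

section Weight

lemma ZMod.two_add_one_eq_zero_iff (a : ZMod 2) : a + 1 = 0 ↔ a ≠ 0 := by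
  revert a; decide

lemma ZMod.two_eq_of_ne_zero_iff {a b : ZMod 2} (h : a ≠ 0 ↔ b ≠ 0) : a = b := by
  revert a b h; decide

lemma add_one_add_one (e : Fin ℓ → ZMod 2) : e + 1 + 1 = e :=
  funext fun j => CharTwo.add_cancel_right (e j) 1

lemma wt_add_one (e : Fin ℓ → ZMod 2) : wt (e + 1) = ℓ - wt e := by
  have h := card_filter_add_card_filter_not (s := univ) (fun j => e j ≠ 0)
  simp only [card_univ, Fintype.card_fin, ne_eq, not_not] at h
  simp only [wt, Pi.add_apply, Pi.one_apply, ne_eq, ZMod.two_add_one_eq_zero_iff, not_not]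
  omega

lemma card_filter_wt_eq_le_choose (w : ℕ) :
    #{e : Fin ℓ → ZMod 2 | wt e = w} ≤ ℓ.choose w := by
  calc #{e : Fin ℓ → ZMod 2 | wt e = w}
      ≤ #(powersetCard w (univ : Finset (Fin ℓ))) := by
        refine card_le_card_of_injOn (fun e => ({j | e j ≠ 0} : Finset (Fin ℓ)))
          (fun e he => ?_) fun e _ e' _ h => ?_
        · simpa [mem_powersetCard, wt] using he
        · funext j
          exact ZMod.two_eq_of_ne_zero_iff (by simpa using congrArg (j ∈ ·) h)
    _ = ℓ.choose w := by simp

end Weight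

section KernelCode

variable (K : Matrix (Fin ℓ) (Fin ℓ) (ZMod 2))

lemma row_mem_kernelCode {i : ℕ} {r : Fin ℓ} (h : i ≤ r) : K r ∈ kernelCode K i :=
  Submodule.subset_span ⟨r, h, rfl⟩

lemma kernelCode_antitone : Antitone (kernelCode K) :=
  fun _ _ h => Submodule.span_mono fun _ ⟨r, hr, hv⟩ => ⟨r, h.trans hr, hv⟩

lemma vecMul_mem_kernelCode {i : ℕ} {d : Fin ℓ → ZMod 2}
    (hd : ∀ r : Fin ℓ, (r : ℕ) < i → d r = 0) : d ᵥ* K ∈ kernelCode K i := by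
  rw [vecMul_eq_sum]
  refine Submodule.sum_mem _ fun r _ => ?_
  rcases lt_or_ge (r : ℕ) i with hr | hr
  · simp [hd r hr]
  · exact Submodule.smul_mem _ _ (row_mem_kernelCode K hr)

lemma row_notMem_kernelCode (hK : IsUnit K.det) {i : ℕ} {r : Fin ℓ} (hr : (r : ℕ) < i) :
    K r ∉ kernelCode K i := by
  have hli : LinearIndependent (ZMod 2) fun r => K r :=
    linearIndependent_rows_iff_isUnit.2 ((isUnit_iff_isUnit_det K).2 hK)
  have := hli.notMem_span_image (s := {r : Fin ℓ | i ≤ r}) (x := r) (by simpa using hr)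
  unfold kernelCode
  convert this using 3
  ext v
  simp [eq_comm]

lemma mem_dualCode_kernelCode {i : ℕ} {v : Fin ℓ → ZMod 2}
    (h : ∀ r : Fin ℓ, i ≤ r → v ⬝ᵥ K r = 0) : v ∈ dualCode (kernelCode K i) := by
  intro c hc
  change v ⬝ᵥ c = 0
  induction hc using Submodule.span_induction with
  | mem x hx => obtain ⟨r, hr, rfl⟩ := hx; exact h r hr
  | zero => exact dotProduct_zero v
  | add x y _ _ hx hy => rw [dotProduct_add, hx, hy, add_zero]
  | smul a x _ hx => rw [dotProduct_smul, hx, smul_zero]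

lemma SelfDual.kernelCode_eq_dualCode {K : Matrix (Fin ℓ) (Fin ℓ) (ZMod 2)} (hsd : SelfDual K)
    {a b : ℕ} (hab : a + b = ℓ) : kernelCode K a = dualCode (kernelCode K b) := by
  obtain rfl : b = ℓ - a := by omega
  exact hsd a (by omega)

end KernelCode

lemma Uncorrectable.exists_coset_codeword {K : Matrix (Fin ℓ) (Fin ℓ) (ZMod 2)} {i : Fin ℓ}
    {e : Fin ℓ → ZMod 2} (h : Uncorrectable K i e) :
    ∃ z ∈ kernelCode K (i + 1), ∀ j, e j = 0 → (K i + z) j = 0 := by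
  obtain ⟨u', u'', hprefix, hi, hcode⟩ := h
  have hdi : u' i - u'' i = 1 := by
    simpa using ZMod.two_eq_of_ne_zero_iff (b := 1) (by simpa [sub_eq_zero] using hi)
  refine ⟨(u' - u'' - Pi.single i 1) ᵥ* K, vecMul_mem_kernelCode K fun r hr => ?_, fun j hj => ?_⟩
  · rcases (Nat.lt_succ_iff.1 hr).lt_or_eq with hlt | heq
    · simp [hprefix r hlt, (Fin.lt_def.2 hlt).ne]
    · simp [Fin.ext heq, hdi]
  · simp [sub_vecMul, hcode j hj, CharTwo.add_self_eq_zero]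

theorem SelfDual.dotProduct_coset_ne_zero {K : Matrix (Fin ℓ) (Fin ℓ) (ZMod 2)} (hK : IsUnit K.det)
    (hsd : SelfDual K) (i : Fin ℓ) {z z' : Fin ℓ → ZMod 2} (hz : z ∈ kernelCode K (i + 1))
    (hz' : z' ∈ kernelCode K (i.rev + 1)) : (K i.rev + z') ⬝ᵥ (K i + z) ≠ 0 := by
  intro horth
  set c' := K i.rev + z'
  have hrev : (i.rev : ℕ) + 1 = ℓ - i := by rw [Fin.val_rev]; omega
  have hc'_dual : c' ∈ dualCode (kernelCode K (i + 1)) := by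
    rw [← hsd.kernelCode_eq_dualCode (a := i.rev) (by omega)]
    exact add_mem (row_mem_kernelCode K le_rfl) (kernelCode_antitone K (by omega) hz')
  have hc'_row : c' ⬝ᵥ K i = 0 := by
    have hc'z : c' ⬝ᵥ z = 0 := hc'_dual z hz
    rwa [dotProduct_add, hc'z, add_zero] at horth
  have hc'_mem : c' ∈ kernelCode K (i.rev + 1) := by
    rw [hsd.kernelCode_eq_dualCode (b := i) (by omega)]
    refine mem_dualCode_kernelCode K fun r hr => ?_
    rcases hr.eq_or_lt with h | h
    · rwa [← Fin.ext h]
    · exact hc'_dual _ (row_mem_kernelCode K h)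
  have hrow_mem : K i.rev ∈ kernelCode K (i.rev + 1) := by
    simpa only [c', add_sub_cancel_right] using sub_mem hc'_mem hz'
  exact row_notMem_kernelCode K hK (Nat.lt_succ_self _) hrow_mem

theorem SelfDual.not_uncorrectable_add_one {K : Matrix (Fin ℓ) (Fin ℓ) (ZMod 2)}
    (hK : IsUnit K.det) (hsd : SelfDual K) {i : Fin ℓ} {e : Fin ℓ → ZMod 2}
    (h : Uncorrectable K i e) : ¬ Uncorrectable K i.rev (e + 1) := by
  intro h'
  obtain ⟨z, hz, hc⟩ := h.exists_coset_codeword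
  obtain ⟨z', hz', hc'⟩ := h'.exists_coset_codeword
  refine hsd.dotProduct_coset_ne_zero hK i hz hz' (sum_eq_zero fun j _ => ?_)
  by_cases hej : e j = 0
  · rw [hc j hej, mul_zero]
  · rw [hc' j ((ZMod.two_add_one_eq_zero_iff _).2 hej), zero_mul]

open Classical in
lemma ecount_eq_card_filter (K : Matrix (Fin ℓ) (Fin ℓ) (ZMod 2)) (i : Fin ℓ) (w : ℕ) :
    Ecount K i w = #{e | Uncorrectable K i e ∧ wt e = w} := by
  rw [Ecount, Nat.card_eq_fintype_card, Fintype.card_subtype]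

theorem duality_lemma_general {ℓ : ℕ}
    (K : Matrix (Fin ℓ) (Fin ℓ) (ZMod 2)) (hK : IsUnit K.det)
    (hsd : SelfDual K) (i : Fin ℓ) (w : ℕ) (hw : w ≤ ℓ) :
    Ecount K i w + Ecount K i.rev (ℓ - w) ≤ ℓ.choose w := by
  classical
  set A := ({e | Uncorrectable K i e ∧ wt e = w} : Finset (Fin ℓ → ZMod 2))
  set B := ({e | Uncorrectable K i.rev e ∧ wt e = ℓ - w} : Finset (Fin ℓ → ZMod 2))
  have hB : #(B.image (· + 1)) = #B := card_image_of_injective _ (add_left_injective 1)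
  have hdisj : Disjoint A (B.image (· + 1)) := by
    simp only [A, B, disjoint_left, mem_filter, mem_image, mem_univ, true_and]
    rintro _ ⟨he, -⟩ ⟨e, ⟨he', -⟩, rfl⟩
    exact hsd.not_uncorrectable_add_one hK he (by rwa [add_one_add_one])
  have hsub : A ∪ B.image (· + 1) ⊆ ({e | wt e = w} : Finset (Fin ℓ → ZMod 2)) := by
    intro e
    simp only [A, B, mem_union, mem_filter, mem_image, mem_univ, true_and]
    rintro (⟨-, he⟩ | ⟨e, ⟨-, he⟩, rfl⟩)
    · exact he
    · rw [wt_add_one, he]; omega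
  rw [ecount_eq_card_filter, ecount_eq_card_filter, ← hB, ← card_union_of_disjoint hdisj]
  exact (card_le_card hsub).trans (card_filter_wt_eq_le_choose w)

/-- Duality lemma: for a self-dual kernel, `E_{i,w} + E_{ℓ+1-i,ℓ-w} ≤ binom(ℓ,w)`. -/
theorem duality_lemma {ℓ : ℕ} (hℓ : 0 < ℓ)
    (K : Matrix (Fin ℓ) (Fin ℓ) (ZMod 2)) (hK : IsUnit K.det)
    (hsd : SelfDual K) (i : Fin ℓ) (w : ℕ) (hw : w ≤ ℓ) :
    Ecount K i w + Ecount K i.rev (ℓ - w) ≤ ℓ.choose w :=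
  duality_lemma_general K hK hsd i w hw
end

section
/- Let K be an invertible self-dual ℓ×ℓ matrix over F_2 and fix i with 1 ≤ i ≤ ℓ. If an erasure pattern e is uncorrectable for bit-channel i, then its complement ē (the vector with supp(ē) = {1,…,ℓ} \ supp(e)) is correctable (i.e., not uncorrectable) for bit-channel ℓ+1-i. -/
open Matrix

lemma Matrix.isUnit_apply_rev_of_isUnit_det {R : Type*} [CommRing R] {n : ℕ}
    {G : Matrix (Fin n) (Fin n) R} (hG : ∀ r s : Fin n, n ≤ r + s → G r s = 0)
    (hdet : IsUnit G.det) (r : Fin n) : IsUnit (G r r.rev) := by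
  set B := G.submatrix id Fin.revPerm
  have hB : B.IsUpperTriangular := fun a b (hba : b < a) => hG _ _ (by
    simp only [id, Fin.revPerm_apply, Fin.val_rev]
    have := Fin.lt_def.mp hba
    omega)
  have hBdet : IsUnit B.det := by
    rw [det_permute']
    exact ((Equiv.Perm.sign _).isUnit.map (Int.castRingHom R)).mul hdet
  rw [det_of_isUpperTriangular hB, IsUnit.prod_univ_iff] at hBdet
  exact hBdet r

lemma Matrix.dotProduct_mulVec_eq_of_antitriangular {R : Type*} [CommSemiring R] {n : ℕ}
    {G : Matrix (Fin n) (Fin n) R} (hG : ∀ r s : Fin n, n ≤ r + s → G r s = 0)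
    {i : Fin n} {x y : Fin n → R} (hx : ∀ r < i, x r = 0) (hy : ∀ s < i.rev, y s = 0) :
    x ⬝ᵥ (G *ᵥ y) = x i * G i i.rev * y i.rev := by
  simp only [dotProduct, mulVec, Finset.mul_sum]
  rw [← Fintype.sum_prod_type' (f := fun r s => x r * (G r s * y s))]
  refine (Fintype.sum_eq_single (i, i.rev) fun ⟨r, s⟩ hrs => ?_).trans (mul_assoc _ _ _).symm
  simp only [ne_eq, Prod.mk.injEq, not_and_or] at hrs
  rcases lt_or_ge r i with hr | hr
  · simp [hx r hr]
  rcases lt_or_ge s i.rev with hs | hs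
  · simp [hy s hs]
  have : n ≤ r + s := by
    rw [Fin.le_def, Fin.val_rev] at hs
    rw [← Fin.val_inj, ← Fin.val_inj, Fin.val_rev] at hrs
    rw [Fin.le_def] at hr
    omega
  simp [hG r s this]

lemma SelfDual.dotProduct_row_eq_zero {ℓ : ℕ} {K : Matrix (Fin ℓ) (Fin ℓ) (ZMod 2)}
    (hsd : SelfDual K) {r s : Fin ℓ} (h : ℓ ≤ r + s) : K r ⬝ᵥ K s = 0 := by
  have hdual := hsd (ℓ - s) (Nat.sub_le _ _)
  rw [Nat.sub_sub_self s.isLt.le] at hdual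
  have hr : K r ∈ kernelCode K (ℓ - s) := Submodule.subset_span ⟨r, by omega, rfl⟩
  rw [hdual] at hr
  exact hr (K s) (Submodule.subset_span ⟨s, le_rfl, rfl⟩)

lemma uncorrectable_iff_exists_vecMul {ℓ : ℕ} (K : Matrix (Fin ℓ) (Fin ℓ) (ZMod 2)) (i : Fin ℓ)
    (e : Fin ℓ → ZMod 2) :
    Uncorrectable K i e ↔
      ∃ x : Fin ℓ → ZMod 2, (∀ j < i, x j = 0) ∧ x i ≠ 0 ∧ ∀ j, e j = 0 → (x ᵥ* K) j = 0 := by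
  constructor
  · rintro ⟨u', u'', hlow, hi, hcode⟩
    refine ⟨u' - u'', fun j hj => sub_eq_zero.mpr (hlow j hj), sub_ne_zero.mpr hi, fun j hj => ?_⟩
    rw [sub_vecMul, Pi.sub_apply, hcode j hj, sub_self]
  · rintro ⟨x, hlow, hi, hcode⟩
    exact ⟨x, 0, hlow, hi, by simpa using hcode⟩

theorem complement_correctable_general {ℓ : ℕ}
    (K : Matrix (Fin ℓ) (Fin ℓ) (ZMod 2)) (hK : IsUnit K.det)
    (hsd : SelfDual K) (i : Fin ℓ) (e : Fin ℓ → ZMod 2)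
    (he : Uncorrectable K i e) :
    ¬ Uncorrectable K i.rev (fun j => e j + 1) := by
  rw [uncorrectable_iff_exists_vecMul] at he ⊢
  rintro ⟨y, hy_low, hy_i, hy_code⟩
  obtain ⟨x, hx_low, hx_i, hx_code⟩ := he
  have hgram : ∀ r s : Fin ℓ, ℓ ≤ r + s → (K * Kᵀ) r s = 0 :=
    fun r s h => hsd.dotProduct_row_eq_zero h
  have hcomplement : ∀ a : ZMod 2, a ≠ 0 → a + 1 = 0 := by decide
  have horth : (x ᵥ* K) ⬝ᵥ (y ᵥ* K) = 0 := Finset.sum_eq_zero fun j _ => by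
    by_cases hj : e j = 0
    · rw [hx_code j hj, zero_mul]
    · rw [hy_code j (hcomplement _ hj), mul_zero]
  rw [← mulVec_transpose K y, ← dotProduct_mulVec, mulVec_mulVec,
    dotProduct_mulVec_eq_of_antitriangular hgram hx_low hy_low] at horth
  have hdiag := isUnit_apply_rev_of_isUnit_det hgram (by rw [det_mul, det_transpose]; exact hK.mul hK) i
  exact mul_ne_zero (mul_ne_zero hx_i hdiag.ne_zero) hy_i horth

/-- For a self-dual kernel, the complement of an erasure pattern uncorrectable
for bit-channel `i` is correctable for bit-channel `ℓ+1-i`. -/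
theorem complement_correctable {ℓ : ℕ} (hℓ : 0 < ℓ)
    (K : Matrix (Fin ℓ) (Fin ℓ) (ZMod 2)) (hK : IsUnit K.det)
    (hsd : SelfDual K) (i : Fin ℓ) (e : Fin ℓ → ZMod 2)
    (he : Uncorrectable K i e) :
    ¬ Uncorrectable K i.rev (fun j => e j + 1) :=
  complement_correctable_general K hK hsd i e he
end

section
/- Let K be an invertible self-dual ℓ×ℓ matrix over F_2. Then for every i with 1 ≤ i ≤ ℓ and every w with 0 ≤ w ≤ ℓ, the inequality of the duality lemma holds with equality: E_{i,w} + E_{ℓ+1-i, ℓ-w} = binom(ℓ, w). -/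
/-!
Write `A = C_{i+1} ⊂ B = C_i = A + ⟨g_i⟩`. An erasure pattern `e` is uncorrectable for channel `i`
iff some `c ∈ B \ A` vanishes off `supp e`. By self-duality the codes of channel `ℓ + 1 - i` are
`A^⊥ ⊃ B^⊥`, so the complementary pattern is uncorrectable for it iff some `x ∈ A^⊥ \ B^⊥` vanishes
on `supp e`. Both cannot happen: `c` and `x` have disjoint supports, so `x ⊥ c` and hence
`x ⊥ B`. One of them must happen: if no such `c` exists, `g_i` lies outside
`A + {v | v vanishes off supp e}`, and a linear form separating them is `⟨x, ·⟩` for a suitable `x`.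
Complementation is therefore a bijection between the weight-`w` patterns correctable for `i` and
the weight-`(ℓ - w)` patterns uncorrectable for `ℓ + 1 - i`.
-/

open Matrix

theorem zmod_two_one_add_eq_zero_iff (x : ZMod 2) : 1 + x = 0 ↔ x ≠ 0 := by
  decide +revert

theorem Nat.card_subtype_and_add_card_subtype_not_and {α : Type*} [Finite α] (p q : α → Prop) :
    Nat.card {x // p x ∧ q x} + Nat.card {x // ¬ p x ∧ q x} = Nat.card {x // q x} := by
  classical
  have := Fintype.ofFinite α
  simp only [Nat.card_eq_fintype_card, Fintype.card_subtype]
  rw [← Finset.card_filter_add_card_filter_not (s := Finset.univ.filter q) p,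
    Finset.filter_filter, Finset.filter_filter]
  simp only [and_comm]

section Coordinates

variable {F ι : Type*} [Field F] [Fintype ι]

theorem dotProduct_eq_zero_of_disjoint {x c : ι → F} (h : ∀ j, x j = 0 ∨ c j = 0) :
    x ⬝ᵥ c = 0 :=
  Finset.sum_eq_zero fun j _ => by rcases h j with h | h <;> simp [h]

theorem exists_mem_sup_span_notMem_iff [DecidableEq ι] {A : Submodule F (ι → F)} {b : ι → F}
    (hb : b ∉ A) (p : ι → Prop) :
    (∃ c ∈ A ⊔ F ∙ b, c ∉ A ∧ ∀ j, p j → c j = 0) ↔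
      ¬ ∃ x : ι → F, (∀ a ∈ A, x ⬝ᵥ a = 0) ∧ x ⬝ᵥ b ≠ 0 ∧ ∀ j, ¬ p j → x j = 0 := by
  constructor
  · rintro ⟨c, hc, hcA, hcp⟩ ⟨x, hxA, hxb, hxp⟩
    obtain ⟨a, ha, _, hz, rfl⟩ := Submodule.mem_sup.1 hc
    obtain ⟨t, rfl⟩ := Submodule.mem_span_singleton.1 hz
    have ht : t ≠ 0 := by rintro rfl; simp_all
    have hxc : x ⬝ᵥ (a + t • b) = 0 :=
      dotProduct_eq_zero_of_disjoint fun j => by by_cases hj : p j <;> simp [hcp, hxp, hj]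
    simp_all [dotProduct_add]
  · intro hx
    by_contra! hc
    apply hx
    set Z : Submodule F (ι → F) := Submodule.pi {j | p j} fun _ => ⊥
    have hbZ : b ∉ A ⊔ Z := by
      intro hbAZ
      obtain ⟨a, ha, z, hz, rfl⟩ := Submodule.mem_sup.1 hbAZ
      have hzB : z ∈ A ⊔ F ∙ (a + z) := by
        simpa using sub_mem (Submodule.mem_sup_right (Submodule.mem_span_singleton_self (a + z)))
          (Submodule.mem_sup_left ha)
      obtain ⟨j, hj, hzj⟩ := hc z hzB fun hzA => hb (A.add_mem ha hzA)
      exact hzj (by simpa using (Submodule.mem_pi.1 hz) j hj)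
    obtain ⟨f, hfb, hf⟩ := Submodule.exists_dual_map_eq_bot_of_notMem hbZ inferInstance
    rw [← LinearMap.le_ker_iff_map] at hf
    set x := (dotProductEquiv F ι).symm f
    have hxf : ∀ v, x ⬝ᵥ v = f v := fun v =>
      LinearMap.congr_fun ((dotProductEquiv F ι).apply_symm_apply f) v
    refine ⟨x, fun a ha => ?_, by rwa [hxf], fun j hj => ?_⟩
    · rw [hxf, hf (Submodule.mem_sup_left ha)]
    · refine hf (Submodule.mem_sup_right (Submodule.mem_pi.2 fun k hk => ?_))
      simp [show k ≠ j by rintro rfl; exact hj hk]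

end Coordinates

section KernelCode

variable {ℓ : ℕ} {K : Matrix (Fin ℓ) (Fin ℓ) (ZMod 2)}

theorem kernelCode_eq_map (n : ℕ) :
    kernelCode K n = (Submodule.pi {j : Fin ℓ | (j : ℕ) < n} fun _ => ⊥).map (vecMulLinear K) := by
  apply le_antisymm
  · refine Submodule.span_le.2 ?_
    rintro _ ⟨r, hr, rfl⟩
    refine ⟨Pi.single r 1, Submodule.mem_pi.2 fun j hj => ?_, single_one_vecMul r K⟩
    simp [show j ≠ r by rintro rfl; exact absurd hj (not_lt.2 hr)]
  · rintro _ ⟨d, hd, rfl⟩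
    rw [vecMulLinear_apply, vecMul_eq_sum]
    refine Submodule.sum_mem _ fun r _ => ?_
    by_cases hr : n ≤ (r : ℕ)
    · exact Submodule.smul_mem _ _ (Submodule.subset_span ⟨r, hr, rfl⟩)
    · simp [show d r = 0 by simpa using Submodule.mem_pi.1 hd r (not_le.1 hr)]

theorem vecMul_mem_kernelCode_iff (hK : IsUnit K.det) {n : ℕ} {d : Fin ℓ → ZMod 2} :
    d ᵥ* K ∈ kernelCode K n ↔ ∀ j : Fin ℓ, (j : ℕ) < n → d j = 0 := by
  rw [kernelCode_eq_map, Submodule.mem_map]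
  constructor
  · rintro ⟨d', hd', hd'd⟩
    rw [← vecMul_injective_of_isUnit ((isUnit_iff_isUnit_det K).2 hK) hd'd]
    simpa using Submodule.mem_pi.1 hd'
  · exact fun hd => ⟨d, Submodule.mem_pi.2 fun j hj => by simpa using hd j hj, rfl⟩

theorem kernelCode_eq_sup_span (i : Fin ℓ) :
    kernelCode K i = kernelCode K (i + 1) ⊔ ZMod 2 ∙ K i := by
  rw [kernelCode, kernelCode, ← Submodule.span_union]
  congr 1
  ext v
  simp only [Set.mem_ofPred_eq, Set.union_singleton, Set.mem_insert_iff]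
  constructor
  · rintro ⟨r, hr, rfl⟩
    obtain hri | hri := hr.eq_or_lt
    · exact .inl (congrArg K (Fin.ext hri.symm))
    · exact .inr ⟨r, hri, rfl⟩
  · rintro (rfl | ⟨r, hr, rfl⟩)
    · exact ⟨i, le_rfl, rfl⟩
    · exact ⟨r, by omega, rfl⟩

theorem row_notMem_kernelCode_succ (hK : IsUnit K.det) (i : Fin ℓ) :
    K i ∉ kernelCode K (i + 1) := by
  rw [show K i = Pi.single i 1 ᵥ* K from (single_one_vecMul i K).symm,
    vecMul_mem_kernelCode_iff hK]
  exact fun h => by simpa using h i (Nat.lt_succ_self _)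

theorem uncorrectable_iff_exists_codeword (hK : IsUnit K.det) (i : Fin ℓ)
    (e : Fin ℓ → ZMod 2) :
    Uncorrectable K i e ↔
      ∃ c ∈ kernelCode K i, c ∉ kernelCode K (i + 1) ∧ ∀ j, e j = 0 → c j = 0 := by
  constructor
  · rintro ⟨u', u'', hlt, hi, he⟩
    refine ⟨(u' - u'') ᵥ* K, (vecMul_mem_kernelCode_iff hK).2 fun j hj => ?_, fun h => ?_,
      fun j hj => by simp [sub_vecMul, he j hj]⟩
    · simpa [sub_eq_zero] using hlt j hj
    · exact hi (sub_eq_zero.1 ((vecMul_mem_kernelCode_iff hK).1 h i (Nat.lt_succ_self _)))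
  · rintro ⟨c, hci, hcs, he⟩
    obtain ⟨d, rfl⟩ : ∃ d, d ᵥ* K = c := ⟨c ᵥ* K⁻¹, by simp [vecMul_vecMul, nonsing_inv_mul K hK]⟩
    rw [vecMul_mem_kernelCode_iff hK] at hci hcs
    refine ⟨d, 0, fun j hj => hci j hj, fun hd => hcs fun j hj => ?_, fun j hj => by simp [he j hj]⟩
    obtain hj | rfl := (Nat.lt_succ_iff_lt_or_eq.1 hj).imp id Fin.ext
    · exact hci j hj
    · exact hd

end KernelCode

section SelfDual

variable {ℓ : ℕ} {K : Matrix (Fin ℓ) (Fin ℓ) (ZMod 2)}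

theorem mem_dualCode {C : Submodule (ZMod 2) (Fin ℓ → ZMod 2)} {x : Fin ℓ → ZMod 2} :
    x ∈ dualCode C ↔ ∀ c ∈ C, x ⬝ᵥ c = 0 :=
  Iff.rfl

theorem mem_dualCode_sup_span_iff {A : Submodule (ZMod 2) (Fin ℓ → ZMod 2)} {b x : Fin ℓ → ZMod 2} :
    x ∈ dualCode (A ⊔ ZMod 2 ∙ b) ↔ x ∈ dualCode A ∧ x ⬝ᵥ b = 0 := by
  simp only [mem_dualCode, Submodule.mem_sup, Submodule.mem_span_singleton]
  constructor
  · intro h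
    exact ⟨fun a ha => h a ⟨a, ha, 0, ⟨0, zero_smul _ _⟩, add_zero a⟩,
      by simpa using h b ⟨0, A.zero_mem, b, ⟨1, one_smul _ _⟩, zero_add b⟩⟩
  · rintro ⟨hA, hb⟩ _ ⟨a, ha, _, ⟨t, rfl⟩, rfl⟩
    simp [dotProduct_add, hA a ha, hb]

theorem SelfDual.kernelCode_rev (hsd : SelfDual K) (i : Fin ℓ) :
    kernelCode K i.rev = dualCode (kernelCode K (i + 1)) := by
  have := hsd i.rev (by omega)
  rw [Fin.val_rev, show ℓ - (ℓ - (i + 1)) = i + 1 by omega] at this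
  rwa [Fin.val_rev]

theorem SelfDual.kernelCode_rev_succ (hsd : SelfDual K) (i : Fin ℓ) :
    kernelCode K (i.rev + 1) = dualCode (kernelCode K i) := by
  have := hsd (i.rev + 1) (by omega)
  rw [Fin.val_rev, show ℓ - (ℓ - (i + 1) + 1) = i by omega] at this
  rwa [Fin.val_rev]

theorem SelfDual.uncorrectable_iff_not_uncorrectable_rev (hsd : SelfDual K) (hK : IsUnit K.det)
    (i : Fin ℓ) (e : Fin ℓ → ZMod 2) :
    Uncorrectable K i e ↔ ¬ Uncorrectable K i.rev (1 + e) := by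
  have hcompl : ∀ j, (1 + e) j = 0 ↔ e j ≠ 0 := fun j => zmod_two_one_add_eq_zero_iff (e j)
  rw [uncorrectable_iff_exists_codeword hK, uncorrectable_iff_exists_codeword hK,
    hsd.kernelCode_rev, hsd.kernelCode_rev_succ, kernelCode_eq_sup_span i,
    exists_mem_sup_span_notMem_iff (row_notMem_kernelCode_succ hK i) fun j => e j = 0]
  simp only [mem_dualCode_sup_span_iff, hcompl]
  simp only [mem_dualCode]
  exact not_congr (exists_congr fun x => by tauto)

end SelfDual

section Weight

open Finset

variable {ℓ : ℕ}

def equivFinsetOfZModTwo {ι : Type*} [Fintype ι] [DecidableEq ι] : (ι → ZMod 2) ≃ Finset ι where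
  toFun e := univ.filter (e · ≠ 0)
  invFun s j := if j ∈ s then 1 else 0
  left_inv e := funext fun j => by
    by_cases h : e j = 0
    · simp [h]
    · simp [h, (show ∀ x : ZMod 2, x ≠ 0 → 1 = x by decide) _ h]
  right_inv s := by ext j; by_cases h : j ∈ s <;> simp [h]

theorem wt_le (e : Fin ℓ → ZMod 2) : wt e ≤ ℓ :=
  (card_filter_le _ _).trans_eq (card_fin ℓ)

theorem wt_one_add (e : Fin ℓ → ZMod 2) : wt (1 + e) = ℓ - wt e := by
  have : univ.filter (fun j => (1 + e) j ≠ 0) = (univ.filter fun j => e j ≠ 0)ᶜ := by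
    ext j
    simp [zmod_two_one_add_eq_zero_iff]
  rw [wt, wt, this, card_compl, Fintype.card_fin]

theorem card_wt_eq (w : ℕ) : Nat.card {e : Fin ℓ → ZMod 2 // wt e = w} = ℓ.choose w := by
  have hwt : {e : Fin ℓ → ZMod 2 // wt e = w} ≃ {s : Finset (Fin ℓ) // #s = w} :=
    equivFinsetOfZModTwo.subtypeEquiv fun _ => Iff.rfl
  rw [Nat.card_congr hwt, Nat.card_eq_fintype_card, Fintype.card_finset_len, Fintype.card_fin]

end Weight

theorem duality_lemma_eq_general {ℓ : ℕ}
    (K : Matrix (Fin ℓ) (Fin ℓ) (ZMod 2)) (hK : IsUnit K.det)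
    (hsd : SelfDual K) (i : Fin ℓ) (w : ℕ) (hw : w ≤ ℓ) :
    Ecount K i w + Ecount K i.rev (ℓ - w) = ℓ.choose w := by
  have hcompl (e : Fin ℓ → ZMod 2) :
      ¬ Uncorrectable K i e ∧ wt e = w ↔ Uncorrectable K i.rev (1 + e) ∧ wt (1 + e) = ℓ - w := by
    rw [(hsd.uncorrectable_iff_not_uncorrectable_rev hK i e).not_left, wt_one_add]
    have := wt_le e
    constructor <;> rintro ⟨h, hwt⟩ <;> exact ⟨h, by omega⟩
  have hrev : Ecount K i.rev (ℓ - w) = Nat.card {e // ¬ Uncorrectable K i e ∧ wt e = w} :=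
    (Nat.card_congr ((Equiv.addLeft 1).subtypeEquiv hcompl)).symm
  rw [Ecount, hrev, Nat.card_subtype_and_add_card_subtype_not_and, card_wt_eq]

/-- For a self-dual kernel, the duality lemma holds with equality:
`E_{i,w} + E_{ℓ+1-i,ℓ-w} = binom(ℓ,w)`. -/
theorem duality_lemma_eq {ℓ : ℕ} (hℓ : 0 < ℓ)
    (K : Matrix (Fin ℓ) (Fin ℓ) (ZMod 2)) (hK : IsUnit K.det)
    (hsd : SelfDual K) (i : Fin ℓ) (w : ℕ) (hw : w ≤ ℓ) :
    Ecount K i w + Ecount K i.rev (ℓ - w) = ℓ.choose w :=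
  duality_lemma_eq_general K hK hsd i w hw
end

section
/- Let ℓ ≥ 2 and let f_1,…,f_ℓ : [0,1] → [0,1] be functions each of which maps (0,1) into (0,1). Let g : [0,1] → [0,∞), define g_0 = g and g_{n+1}(z) = (1/ℓ) ∑_{i=1}^ℓ g_n(f_i(z)), and suppose b ∈ [0,∞) satisfies g_1(z) ≤ b·g(z) for all z ∈ (0,1). Fix z ∈ (0,1), let 0 < a ≤ b' < 1, and suppose m = inf_{y ∈ [a,b']} g(y) > 0. Let Z_n be the process on Ω = (Fin ℓ)^ℕ with the infinite product μ of uniform probability measures defined by Z_0(ω) = z and Z_{n+1}(ω) = f_{ω(n)}(Z_n(ω)). Then for every n ≥ 0, μ({ω : Z_n(ω) ∈ [a,b']}) ≤ b^n · g(z) / m. -/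
open MeasureTheory

/-- The sequence of functions `g_0 = g`, `g_{n+1}(z) = (1/ℓ) ∑ᵢ g_n(f_i(z))`. -/
noncomputable def gseq {ℓ : ℕ} (f : Fin ℓ → ℝ → ℝ) (g : ℝ → ℝ) : ℕ → ℝ → ℝ
  | 0 => g
  | n + 1 => fun z => (1 / ℓ : ℝ) * ∑ i, gseq f g n (f i z)

/-- The random process `Z_0(ω) = z`, `Z_{n+1}(ω) = f_{ω(n)}(Z_n(ω))`. -/
def Zproc {ℓ : ℕ} (f : Fin ℓ → ℝ → ℝ) (z : ℝ) : ℕ → (ℕ → Fin ℓ) → ℝ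
  | 0 => fun _ => z
  | n + 1 => fun ω => f (ω n) (Zproc f z n ω)

/-- `μ` is the infinite product of uniform probability measures on `Fin ℓ`:
it is a probability measure giving each cylinder on the first `n` coordinates
measure `(1/ℓ)^n`. -/
def IsProductOfUniforms {ℓ : ℕ} (μ : Measure (ℕ → Fin ℓ)) : Prop :=
  IsProbabilityMeasure μ ∧
    ∀ (n : ℕ) (y : Fin n → Fin ℓ),
      μ {ω | ∀ k : Fin n, ω (k : ℕ) = y k} = ((ℓ : ENNReal))⁻¹ ^ n

open Finset

/-!
Unwinding the recursion, `g_n(z)` is the average of `g` over the `ℓⁿ` endpoints of the words of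
length `n` applied to `z`, and `μ(Z_n ∈ [a,b'])` is the proportion of those words whose endpoint
lies in `[a,b']`. Since `g ≥ 0` along every orbit and `g ≥ m` on `[a,b']`, this proportion is at
most `g_n(z) / m` (Markov), and iterating `g_1 ≤ b g` along the invariant interval `(0,1)` gives
`g_n(z) ≤ bⁿ g(z)`.
-/

def applyWord {ℓ : ℕ} (f : Fin ℓ → ℝ → ℝ) : (n : ℕ) → ℝ → (Fin n → Fin ℓ) → ℝ
  | 0, z, _ => z
  | n + 1, z, w => applyWord f n (f (w 0) z) (Fin.tail w)

section Words

variable {ℓ : ℕ} (f : Fin ℓ → ℝ → ℝ)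

@[simp]
lemma applyWord_cons (n : ℕ) (z : ℝ) (i : Fin ℓ) (w : Fin n → Fin ℓ) :
    applyWord f (n + 1) z (Fin.cons i w) = applyWord f n (f i z) w := by
  simp only [applyWord, Fin.cons_zero, Fin.tail_cons]

lemma Zproc_succ_eq_shift :
    ∀ (n : ℕ) (z : ℝ) (ω : ℕ → Fin ℓ),
      Zproc f z (n + 1) ω = Zproc f (f (ω 0) z) n (fun k => ω (k + 1))
  | 0, _, _ => rfl
  | n + 1, z, ω => congrArg (f (ω (n + 1))) (Zproc_succ_eq_shift n z ω)

lemma Zproc_eq_applyWord :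
    ∀ (n : ℕ) (z : ℝ) (ω : ℕ → Fin ℓ), Zproc f z n ω = applyWord f n z (ω ∘ Fin.val)
  | 0, _, _ => rfl
  | n + 1, z, ω => by
    rw [Zproc_succ_eq_shift, Zproc_eq_applyWord n]
    rfl

lemma mapsTo_applyWord {s : Set ℝ} (hf : ∀ i, Set.MapsTo (f i) s s) :
    ∀ (n : ℕ) (w : Fin n → Fin ℓ), Set.MapsTo (applyWord f n · w) s s
  | 0, _ => Set.mapsTo_id s
  | n + 1, w => fun _ hz => mapsTo_applyWord hf n (Fin.tail w) (hf (w 0) hz)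

lemma Fintype.sum_fin_succ_pi {β : Type*} [Fintype β] {M : Type*} [AddCommMonoid M] {n : ℕ}
    (F : (Fin (n + 1) → β) → M) :
    ∑ w, F w = ∑ i, ∑ w : Fin n → β, F (Fin.cons i w) := by
  rw [← (Fin.consEquiv fun _ => β).sum_comp, Fintype.sum_prod_type]
  rfl

lemma gseq_eq_sum (g : ℝ → ℝ) :
    ∀ (n : ℕ) (z : ℝ), gseq f g n z = (ℓ : ℝ)⁻¹ ^ n * ∑ w : Fin n → Fin ℓ, g (applyWord f n z w)
  | 0, z => by simp [gseq, applyWord]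
  | n + 1, z => by
    have hstep : ∀ i, gseq f g n (f i z)
        = (ℓ : ℝ)⁻¹ ^ n * ∑ w : Fin n → Fin ℓ, g (applyWord f n (f i z) w) :=
      fun i => gseq_eq_sum g n (f i z)
    simp only [gseq, hstep, Fintype.sum_fin_succ_pi, applyWord_cons, ← mul_sum]
    ring

lemma gseq_le_pow_mul {s : Set ℝ} (hf : ∀ i, Set.MapsTo (f i) s s) {g : ℝ → ℝ} {b : ℝ}
    (hb : 0 ≤ b) (hb1 : ∀ z ∈ s, gseq f g 1 z ≤ b * g z) :
    ∀ (n : ℕ) {z : ℝ}, z ∈ s → gseq f g n z ≤ b ^ n * g z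
  | 0, z, _ => by simp [gseq]
  | n + 1, z, hz => calc
      gseq f g (n + 1) z = (ℓ : ℝ)⁻¹ * ∑ i, gseq f g n (f i z) := by simp [gseq]
      _ ≤ (ℓ : ℝ)⁻¹ * ∑ i, b ^ n * g (f i z) := by
        gcongr with i
        exact gseq_le_pow_mul hf hb hb1 n (hf i hz)
      _ = b ^ n * gseq f g 1 z := by simp [gseq, ← mul_sum]; ring
      _ ≤ b ^ n * (b * g z) := by gcongr; exact hb1 z hz
      _ = b ^ (n + 1) * g z := by ring

end Words

lemma IsProductOfUniforms.measure_preimage_restrict {ℓ : ℕ} {μ : Measure (ℕ → Fin ℓ)}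
    (hμ : IsProductOfUniforms μ) (n : ℕ) (T : Finset (Fin n → Fin ℓ)) :
    μ {ω | ω ∘ Fin.val ∈ T} = #T * (ℓ : ENNReal)⁻¹ ^ n := by
  have hcyl : {ω | ω ∘ Fin.val ∈ T} = ⋃ w ∈ T, {ω | ∀ k : Fin n, ω k = w k} := by
    ext ω
    simp only [Set.mem_iUnion, Set.mem_ofPred_eq, exists_prop]
    exact ⟨fun h => ⟨_, h, fun _ => rfl⟩, fun ⟨w, hw, hω⟩ => (funext hω : ω ∘ Fin.val = w) ▸ hw⟩
  rw [hcyl, measure_biUnion_finset, sum_congr rfl fun w _ => hμ.2 n w, sum_const, nsmul_eq_mul]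
  · intro w _ w' _ hne
    refine Set.disjoint_left.2 fun ω h h' => hne (funext fun k => (h k).symm.trans (h' k))
  · intro w _
    measurability

lemma csInf_image_le_of_pos {s : Set ℝ} {g : ℝ → ℝ} (hm : 0 < sInf (g '' s)) {y : ℝ}
    (hy : y ∈ s) : sInf (g '' s) ≤ g y := by
  refine csInf_le ?_ (Set.mem_image_of_mem g hy)
  by_contra hbdd
  exact hm.ne' (Real.sInf_of_not_bddBelow hbdd)

lemma card_filter_mul_le_sum {α R : Type*} [Semiring R] [PartialOrder R] [IsOrderedAddMonoid R]
    (s : Finset α) (p : α → Prop) [DecidablePred p] {h : α → R} {m : R}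
    (hm : ∀ x ∈ s, p x → m ≤ h x) (h0 : ∀ x ∈ s, 0 ≤ h x) :
    #(s.filter p) * m ≤ ∑ x ∈ s, h x := calc
  #(s.filter p) * m ≤ ∑ x ∈ s.filter p, h x := by
    rw [← nsmul_eq_mul]
    exact card_nsmul_le_sum _ _ _ fun x hx => hm x (mem_filter.1 hx).1 (mem_filter.1 hx).2
  _ ≤ ∑ x ∈ s, h x :=
    sum_le_sum_of_subset_of_nonneg (filter_subset _ _) fun x hx _ => h0 x hx

theorem prob_le_pow_mul_general {ℓ : ℕ} (f : Fin ℓ → ℝ → ℝ)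
    (hf' : ∀ i, Set.MapsTo (f i) (Set.Ioo (0 : ℝ) 1) (Set.Ioo (0 : ℝ) 1))
    (g : ℝ → ℝ) (hg0 : ∀ y ∈ Set.Icc (0 : ℝ) 1, 0 ≤ g y)
    (b : ℝ) (hb : 0 ≤ b)
    (hb1 : ∀ z ∈ Set.Ioo (0 : ℝ) 1, gseq f g 1 z ≤ b * g z)
    (z : ℝ) (hz : z ∈ Set.Ioo (0 : ℝ) 1)
    (a b' : ℝ)
    (hm : 0 < sInf (g '' Set.Icc a b'))
    (μ : Measure (ℕ → Fin ℓ)) (hμ : IsProductOfUniforms μ) (n : ℕ) :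
    (μ {ω | Zproc f z n ω ∈ Set.Icc a b'}).toReal ≤
      b ^ n * g z / sInf (g '' Set.Icc a b') := by
  classical
  set T := univ.filter fun w : Fin n → Fin ℓ => applyWord f n z w ∈ Set.Icc a b'
  have hpreimage : {ω | Zproc f z n ω ∈ Set.Icc a b'} = {ω | ω ∘ Fin.val ∈ T} := by
    ext ω
    simp [T, Zproc_eq_applyWord]
  have hcount : #T * sInf (g '' Set.Icc a b') ≤ ∑ w, g (applyWord f n z w) :=
    card_filter_mul_le_sum _ _ (fun _ _ hw => csInf_image_le_of_pos hm hw)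
      fun w _ => hg0 _ (Set.Ioo_subset_Icc_self (mapsTo_applyWord f hf' n w hz))
  rw [hpreimage, hμ.measure_preimage_restrict, le_div_iff₀ hm]
  simp only [ENNReal.toReal_mul, ENNReal.toReal_pow, ENNReal.toReal_inv, ENNReal.toReal_natCast]
  calc #T * (ℓ : ℝ)⁻¹ ^ n * sInf (g '' Set.Icc a b')
      = (ℓ : ℝ)⁻¹ ^ n * (#T * sInf (g '' Set.Icc a b')) := by ring
    _ ≤ (ℓ : ℝ)⁻¹ ^ n * ∑ w, g (applyWord f n z w) := by gcongr
    _ = gseq f g n z := (gseq_eq_sum f g n z).symm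
    _ ≤ b ^ n * g z := gseq_le_pow_mul f hf' hb hb1 n hz

/-- `μ(Z_n ∈ [a,b']) ≤ bⁿ · g(z) / m`. -/
theorem prob_le_pow_mul {ℓ : ℕ} (hℓ : 2 ≤ ℓ) (f : Fin ℓ → ℝ → ℝ)
    (hf : ∀ i, Set.MapsTo (f i) (Set.Icc (0 : ℝ) 1) (Set.Icc (0 : ℝ) 1))
    (hf' : ∀ i, Set.MapsTo (f i) (Set.Ioo (0 : ℝ) 1) (Set.Ioo (0 : ℝ) 1))
    (g : ℝ → ℝ) (hg0 : ∀ y ∈ Set.Icc (0 : ℝ) 1, 0 ≤ g y)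
    (b : ℝ) (hb : 0 ≤ b)
    (hb1 : ∀ z ∈ Set.Ioo (0 : ℝ) 1, gseq f g 1 z ≤ b * g z)
    (z : ℝ) (hz : z ∈ Set.Ioo (0 : ℝ) 1)
    (a b' : ℝ) (ha : 0 < a) (hab : a ≤ b') (hb' : b' < 1)
    (hm : 0 < sInf (g '' Set.Icc a b'))
    (μ : Measure (ℕ → Fin ℓ)) (hμ : IsProductOfUniforms μ) (n : ℕ) :
    (μ {ω | Zproc f z n ω ∈ Set.Icc a b'}).toReal ≤
      b ^ n * g z / sInf (g '' Set.Icc a b') :=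
  prob_le_pow_mul_general f hf' g hg0 b hb hb1 z hz a b' hm μ hμ n
end
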